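/- arXiv:1404.5752 — 2 statements merged into one kernel-verified Lean document; each statement's English description precedes it below -/
import Mathlib

section
/- Flows to fillings (well-definedness and injectivity of ι). Let P = ((i_1,j_1),…,(i_s,j_s)) be a valid ladder presentation (for parameters n, ℓ, m) and let f be a flow on P. Then: (i) at every step r and for every t ∈ T_r, the component built so far in position t has exactly one addable node of residue i_r, so the filling ι(P,f) is well defined; (ii) ι(P,f) is a standard n-multitableau with entries in {1,…,s}, in which the nodes with entry r are exactly j_r nodes of residue i_r, one in each component t ∈ T_r; (iii) ι is injective: if ι(P,f) = ι(P′,f′) for valid ladder presentations P, P′ (same n, ℓ, m) with flows f, f′, then P = P′ and f = f′. -/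
open scoped Classical

namespace SlnWeb

noncomputable section

/-- `p r` is the length of the `r`-th row (0-indexed) of a Young diagram. -/
def IsPartition (p : ℕ → ℕ) : Prop :=
  Antitone p ∧ ∃ N, p N = 0

/-- The 0-indexed cell `(r, c)` lies in the Young diagram of `p`. -/
def InDiag (p : ℕ → ℕ) (r c : ℕ) : Prop :=
  c < p r

/-- Residue (with shift `ℓ`) of the 0-indexed cell `(r, c)`; for the
corresponding 1-indexed cell `(r+1, c+1)` this is `(c+1) - (r+1) + ℓ`. -/
def resOf (ℓ : ℕ) (r c : ℕ) : ℤ :=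
  (c : ℤ) - (r : ℤ) + (ℓ : ℤ)

/-- `(r, c)` (0-indexed) is an addable cell of `p`. -/
def IsAddableCell (p : ℕ → ℕ) (r c : ℕ) : Prop :=
  c = p r ∧ (r = 0 ∨ p r < p (r - 1))

/-- `(r, c)` (0-indexed) is a removable cell of `p`. -/
def IsRemovableCell (p : ℕ → ℕ) (r c : ℕ) : Prop :=
  c + 1 = p r ∧ p (r + 1) < p r

/-- Add to `p` its (unique) addable cell of residue `k`, if there is one. -/
def addRes (ℓ : ℕ) (p : ℕ → ℕ) (k : ℤ) : ℕ → ℕ :=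
  if h : ∃ r, (r = 0 ∨ p r < p (r - 1)) ∧ (p r : ℤ) - (r : ℤ) + (ℓ : ℤ) = k then
    Function.update p h.choose (p h.choose + 1)
  else p

/-- A multitableau: `shape t r` is the length of the `r`-th row (0-indexed) of
the `t`-th component (components are indexed by `t ∈ {1,…,n}`), and
`entry t r c` is the entry of the 0-indexed cell `(r, c)` of the `t`-th
component; everything is normalised to `0` outside of the diagrams. -/
structure MultiTableau where
  shape : ℕ → ℕ → ℕ
  entry : ℕ → ℕ → ℕ → ℕ

/-- A standard `n`-multitableau with entries in `{1,…,s}` (residue shift `ℓ`):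
each component is a partition, components are normalised to be empty outside
of `{1,…,n}`, entries lie in `{1,…,s}` and are normalised to `0` outside the
diagram, entries strictly increase along rows and down columns, no entry is
repeated inside a single component, and all nodes carrying the same entry have
the same residue. -/
def IsStandard (n ℓ s : ℕ) (M : MultiTableau) : Prop :=
  (∀ t, IsPartition (M.shape t)) ∧
  (∀ t, (t = 0 ∨ n < t) → ∀ r, M.shape t r = 0) ∧
  (∀ t r c, InDiag (M.shape t) r c → 1 ≤ M.entry t r c ∧ M.entry t r c ≤ s) ∧
  (∀ t r c, ¬ InDiag (M.shape t) r c → M.entry t r c = 0) ∧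
  (∀ t r c c', c < c' → InDiag (M.shape t) r c' → M.entry t r c < M.entry t r c') ∧
  (∀ t r r' c, r < r' → InDiag (M.shape t) r' c → M.entry t r c < M.entry t r' c) ∧
  (∀ t r c r' c', InDiag (M.shape t) r c → InDiag (M.shape t) r' c' →
    M.entry t r c = M.entry t r' c' → r = r' ∧ c = c') ∧
  (∀ t r c t' r' c', InDiag (M.shape t) r c → InDiag (M.shape t') r' c' →
    M.entry t r c = M.entry t' r' c' → resOf ℓ r c = resOf ℓ r' c')

/-- A ladder presentation of length `s` for the parameters `n`, `ℓ`, `m`: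
the `r`-th step is `F_{i_r}^{(j_r)}` with `i_r = res r ∈ {1,…,m-1}` and
`j_r = mult r ∈ {1,…,n}`. -/
structure LadderPresentation (n ℓ m s : ℕ) where
  res : Fin s → ℕ
  mult : Fin s → ℕ
  res_pos : ∀ r, 1 ≤ res r
  res_lt : ∀ r, res r < m
  mult_pos : ∀ r, 1 ≤ mult r
  mult_le : ∀ r, mult r ≤ n

/-- The weight sequence `k⁽⁰⁾, k⁽¹⁾, …` of a ladder presentation; positions `p`
are 1-indexed, `k⁽⁰⁾ = (n^ℓ)` and `k⁽ʳ⁾ = k⁽ʳ⁻¹⁾ - j_r·e_{i_r} + j_r·e_{i_r+1}`. -/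
def wtSeq {n ℓ m s : ℕ} (P : LadderPresentation n ℓ m s) : ℕ → ℕ → ℤ
  | 0, p => if 1 ≤ p ∧ p ≤ ℓ then (n : ℤ) else 0
  | r + 1, p =>
    if h : r < s then
      wtSeq P r p - (if p = P.res ⟨r, h⟩ then (P.mult ⟨r, h⟩ : ℤ) else 0) +
        (if p = P.res ⟨r, h⟩ + 1 then (P.mult ⟨r, h⟩ : ℤ) else 0)
    else wtSeq P r p

/-- A ladder presentation is valid if every entry of every weight in its weight
sequence lies in `{0,…,n}`. -/
def IsValid {n ℓ m s : ℕ} (P : LadderPresentation n ℓ m s) : Prop :=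
  ∀ r, r ≤ s → ∀ p, 1 ≤ p → p ≤ m → 0 ≤ wtSeq P r p ∧ wtSeq P r p ≤ (n : ℤ)

/-- A flow on a (valid) ladder presentation `P`.  `S r p ⊆ {1,…,n}` is the flow
label of the `p`-th boundary point after `r` steps (normalised to `∅` outside
`p ∈ {1,…,m}`), and `T r` is the flow label of the rung of the `r`-th ladder. -/
structure LadderFlow {n ℓ m s : ℕ} (P : LadderPresentation n ℓ m s) where
  S : Fin (s + 1) → ℕ → Finset ℕ
  T : Fin s → Finset ℕ
  S_sub : ∀ r p, S r p ⊆ Finset.Icc 1 n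
  S_outside : ∀ r p, (p = 0 ∨ m < p) → S r p = ∅
  S_card : ∀ r p, 1 ≤ p → p ≤ m → ((S r p).card : ℤ) = wtSeq P r.val p
  S_init : ∀ p, 1 ≤ p → p ≤ m → S 0 p = if p ≤ ℓ then Finset.Icc 1 n else ∅
  T_sub : ∀ r : Fin s, T r ⊆ S r.castSucc (P.res r)
  T_card : ∀ r : Fin s, (T r).card = P.mult r
  T_disj : ∀ r : Fin s, Disjoint (T r) (S r.castSucc (P.res r + 1))
  S_step_res : ∀ r : Fin s, S r.succ (P.res r) = S r.castSucc (P.res r) \ T r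
  S_step_res1 : ∀ r : Fin s, S r.succ (P.res r + 1) = S r.castSucc (P.res r + 1) ∪ T r
  S_step_other : ∀ r : Fin s, ∀ p, p ≠ P.res r → p ≠ P.res r + 1 →
    S r.succ p = S r.castSucc p

/-- Add, for every component `t ∈ Tset`, the (unique) addable cell of residue
`k` of that component, giving each of the new cells the entry `e`. -/
def stepAdd (ℓ : ℕ) (k : ℤ) (e : ℕ) (Tset : Finset ℕ) (M : MultiTableau) :
    MultiTableau where
  shape := fun t => if t ∈ Tset then addRes ℓ (M.shape t) k else M.shape t
  entry := fun t r c =>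
    if t ∈ Tset ∧ M.shape t r ≤ c ∧ c < addRes ℓ (M.shape t) k r then e
    else M.entry t r c

/-- The sequence of intermediate multitableaux built by the filling map `ι`:
at step `r` (0-indexed), for each `t ∈ T r`, the unique addable node of residue
`i_r` is added to the `t`-th component, with entry `r + 1`. -/
def iotaAux {n ℓ m s : ℕ} (P : LadderPresentation n ℓ m s) (f : LadderFlow P) :
    ℕ → MultiTableau
  | 0 => ⟨fun _ _ => 0, fun _ _ _ => 0⟩
  | r + 1 =>
    if h : r < s then
      stepAdd ℓ (P.res ⟨r, h⟩ : ℤ) (r + 1) (f.T ⟨r, h⟩) (iotaAux P f r)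
    else iotaAux P f r

/-- The filling map `ι`. -/
def iotaMap {n ℓ m s : ℕ} (P : LadderPresentation n ℓ m s) (f : LadderFlow P) :
    MultiTableau :=
  iotaAux P f s

/-- Every entry of `{1,…,s}` occurs in `M`. -/
def AllEntriesOccur (s : ℕ) (M : MultiTableau) : Prop :=
  ∀ e, 1 ≤ e → e ≤ s → ∃ t r c, InDiag (M.shape t) r c ∧ M.entry t r c = e

/-- All nodes of `M` have residue in `{1,…,m-1}`. -/
def ResInRange (ℓ m : ℕ) (M : MultiTableau) : Prop :=
  ∀ t r c, InDiag (M.shape t) r c → 1 ≤ resOf ℓ r c ∧ resOf ℓ r c ≤ (m : ℤ) - 1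

/-- `(P, f)` is the image of the multitableau `M` under the growth map `g`:
`i_r` is the common residue of the nodes of `M` with entry `r`, and `T r` is
the set of components of `M` containing a node with entry `r` (the remaining
data of `f`, i.e. the tuples `S`, is forced by the flow conditions, and
`j_r = |T r|` is forced by the flow condition `T_card`). -/
def GrowthData {n ℓ m s : ℕ} (M : MultiTableau) (P : LadderPresentation n ℓ m s)
    (f : LadderFlow P) : Prop :=
  (∀ r : Fin s, ∀ t r' c, InDiag (M.shape t) r' c → M.entry t r' c = r.val + 1 →
    (P.res r : ℤ) = resOf ℓ r' c) ∧
  (∀ r : Fin s, ∀ t,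
    t ∈ f.T r ↔ ∃ r' c, InDiag (M.shape t) r' c ∧ M.entry t r' c = r.val + 1)

/-- `#{(a,b) ∈ A × B : a < b}`. -/
def inv2 (A B : Finset ℕ) : ℕ :=
  ((A ×ˢ B).filter fun ab => ab.1 < ab.2).card

/-- The weight of a flow:
`wt(f) = Σ_r ( inv(S⁽ʳ⁾_{i_r}, T_r) − inv(S⁽ʳ⁻¹⁾_{i_r+1}, T_r) )`. -/
def wtFlow {n ℓ m s : ℕ} (P : LadderPresentation n ℓ m s) (f : LadderFlow P) : ℤ :=
  ∑ r : Fin s,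
    ((inv2 (f.S r.succ (P.res r)) (f.T r) : ℤ) -
      (inv2 (f.S r.castSucc (P.res r + 1)) (f.T r) : ℤ))

/-- The components of `M` (among `{1,…,n}`) containing a node with entry `j`. -/
def compsWith (n : ℕ) (M : MultiTableau) (j : ℕ) : Finset ℕ :=
  (Finset.Icc 1 n).filter fun t => ∃ r c, InDiag (M.shape t) r c ∧ M.entry t r c = j

/-- The shape of `M` with all entries `> j` removed, where moreover in the
components outside `Keep` the nodes with entry `j` are removed as well. -/
def shapeTrunc (M : MultiTableau) (j : ℕ) (Keep : Finset ℕ) : ℕ → ℕ → ℕ :=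
  fun t r =>
    ((Finset.range (M.shape t r)).filter fun c =>
      M.entry t r c ≤ (if t ∈ Keep then j else j - 1)).card

/-- The row of the node with entry `j` in component `t` of `M`. -/
def nodeRow (M : MultiTableau) (j t : ℕ) : ℕ :=
  if h : ∃ r c, InDiag (M.shape t) r c ∧ M.entry t r c = j then h.choose else 0

/-- The column of the node with entry `j` in component `t` of `M`. -/
def nodeCol (M : MultiTableau) (j t : ℕ) : ℕ :=
  if h : ∃ r c, InDiag (M.shape t) r c ∧ M.entry t r c = j then
    h.choose_spec.choose
  else 0

/-- The number of addable nodes of `sh` of residue `ρ` lying strictly after the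
position `(t, r)` in the order `⪯` (at most one addable node of a given residue
per component). -/
def cntAddAfter (n ℓ : ℕ) (sh : ℕ → ℕ → ℕ) (ρ : ℤ) (t r : ℕ) : ℕ :=
  ((Finset.Icc 1 n).filter fun t' => ∃ r' c', IsAddableCell (sh t') r' c' ∧
    resOf ℓ r' c' = ρ ∧ (t' < t ∨ (t' = t ∧ r < r'))).card

/-- The number of removable nodes of `sh` of residue `ρ` lying strictly after
the position `(t, r)` in the order `⪯`. -/
def cntRemAfter (n ℓ : ℕ) (sh : ℕ → ℕ → ℕ) (ρ : ℤ) (t r : ℕ) : ℕ :=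
  ((Finset.Icc 1 n).filter fun t' => ∃ r' c', IsRemovableCell (sh t') r' c' ∧
    resOf ℓ r' c' = ρ ∧ (t' < t ∨ (t' = t ∧ r < r'))).card

/-- The contribution `deg(Tʲ)` of the entry `j` to the Brundan–Kleshchev–Wang
degree of the standard multitableau `M`: listing the nodes with entry `j` as
`N₁ ≺ ⋯ ≺ N_t` (i.e. by decreasing component index), it is
`Σ_p (A_p − R_p) − t(t−1)/2`, where `A_p` (resp. `R_p`) is the number of
addable (resp. removable) nodes of the residue of `N_p`, strictly after `N_p`,
of the multipartition underlying `Tʲ` with the nodes `N_{p+1},…,N_t` removed. -/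
def degStep (n ℓ : ℕ) (M : MultiTableau) (j : ℕ) : ℤ :=
  (∑ t ∈ compsWith n M j,
    ((cntAddAfter n ℓ (shapeTrunc M j ((compsWith n M j).filter fun t' => t ≤ t'))
        (resOf ℓ (nodeRow M j t) (nodeCol M j t)) t (nodeRow M j t) : ℤ) -
      (cntRemAfter n ℓ (shapeTrunc M j ((compsWith n M j).filter fun t' => t ≤ t'))
        (resOf ℓ (nodeRow M j t) (nodeCol M j t)) t (nodeRow M j t) : ℤ))) -
  (((compsWith n M j).card * ((compsWith n M j).card - 1) / 2 : ℕ) : ℤ)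

/-- The Brundan–Kleshchev–Wang degree of a standard multitableau with entries
in `{1,…,s}`. -/
def degBKW (n ℓ s : ℕ) (M : MultiTableau) : ℤ :=
  ∑ j ∈ Finset.Icc 1 s, degStep n ℓ M j

/-- `M` has the residue sequence `((i_1,j_1),…,(i_s,j_s))` recorded by `P`:
for each `r`, exactly `j_r` nodes of `M` carry the entry `r` (equivalently,
under standardness, `j_r` components contain the entry `r`) and they all have
residue `i_r`. -/
def HasResSeq {n ℓ m s : ℕ} (P : LadderPresentation n ℓ m s) (M : MultiTableau) :
    Prop :=
  ∀ r : Fin s,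
    (compsWith n M (r.val + 1)).card = P.mult r ∧
    ∀ t r' c, InDiag (M.shape t) r' c → M.entry t r' c = r.val + 1 →
      resOf ℓ r' c = (P.res r : ℤ)

/-- The multipartition `λ(S)` determined by a boundary tuple `S`: writing
`p_1 < ⋯ < p_ℓ` for the elements of `{ p ∈ {1,…,m} : t ∈ S p }`, the `r`-th
part (1-indexed) of its `t`-th component is `p_{ℓ+1−r} − (ℓ+1−r)`. -/
def shapeOfTuple (ℓ m : ℕ) (Sb : ℕ → Finset ℕ) : ℕ → ℕ → ℕ :=
  fun t r =>
    if r < ℓ then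
      (((Finset.Icc 1 m).filter fun p => t ∈ Sb p).sort (· ≤ ·)).getD (ℓ - 1 - r) 0 -
        (ℓ - r)
    else 0


/-! ### Auxiliary lemmas for `flows_to_fillings` -/

section Aux

lemma beta_strict {ℓ : ℕ} {sh : ℕ → ℕ} (hanti : Antitone sh) {row row' : ℕ}
    (h : row < row') (h' : row' < ℓ) :
    sh row' + (ℓ - row') < sh row + (ℓ - row) := by
  have := hanti h.le
  omega

lemma beta_inj {ℓ : ℕ} {sh : ℕ → ℕ} (hanti : Antitone sh) {row row' k : ℕ}
    (h : row < ℓ) (h' : row' < ℓ) (e : sh row + (ℓ - row) = k)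
    (e' : sh row' + (ℓ - row') = k) : row = row' := by
  rcases lt_trichotomy row row' with hlt | heq | hgt
  · exact absurd e (by have := beta_strict hanti hlt h'; omega)
  · exact heq
  · exact absurd e' (by have := beta_strict hanti hgt h; omega)

/-- The unique row with β-number `k` is addable, provided `k+1` is not a β-number. -/
lemma addable_row {ℓ : ℕ} {sh : ℕ → ℕ} (hanti : Antitone sh)
    {k row₀ : ℕ} (h₀ : row₀ < ℓ) (hβ : sh row₀ + (ℓ - row₀) = k)
    (hnot : ¬ ∃ row, row < ℓ ∧ sh row + (ℓ - row) = k + 1) :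
    row₀ = 0 ∨ sh row₀ < sh (row₀ - 1) := by
  by_cases h0 : row₀ = 0
  · exact Or.inl h0
  · right
    by_contra hc
    have hle : sh row₀ ≤ sh (row₀ - 1) := hanti (by omega)
    have heq : sh (row₀ - 1) = sh row₀ := by omega
    exact hnot ⟨row₀ - 1, by omega, by omega⟩

/-- Characterisation of addable cells of positive residue via β-numbers. -/
lemma addable_char {ℓ : ℕ} {sh : ℕ → ℕ} (hz : ∀ row, ℓ ≤ row → sh row = 0)
    {k : ℕ} (hk : 1 ≤ k) {row c : ℕ}
    (h : IsAddableCell sh row c ∧ resOf ℓ row c = (k : ℤ)) :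
    row < ℓ ∧ c = sh row ∧ sh row + (ℓ - row) = k := by
  obtain ⟨⟨hc, hadd⟩, hres⟩ := h
  unfold resOf at hres
  have hrow : row < ℓ := by
    by_contra hge
    have h0 : sh row = 0 := hz row (by omega)
    rw [hc, h0] at hres
    push_cast at hres
    omega
  refine ⟨hrow, hc, ?_⟩
  rw [hc] at hres
  have : (sh row : ℤ) + ((ℓ : ℤ) - (row : ℤ)) = (k : ℤ) := by linarith
  have hcast : ((ℓ - row : ℕ) : ℤ) = (ℓ : ℤ) - (row : ℤ) := by
    have : row ≤ ℓ := hrow.le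
    omega
  omega

lemma existsUnique_addable {ℓ : ℕ} {sh : ℕ → ℕ} (hanti : Antitone sh)
    (hz : ∀ row, ℓ ≤ row → sh row = 0) {k : ℕ} (hk : 1 ≤ k)
    {row₀ : ℕ} (h₀ : row₀ < ℓ) (hβ : sh row₀ + (ℓ - row₀) = k)
    (hnot : ¬ ∃ row, row < ℓ ∧ sh row + (ℓ - row) = k + 1) :
    ∃! rc : ℕ × ℕ, IsAddableCell sh rc.1 rc.2 ∧ resOf ℓ rc.1 rc.2 = (k : ℤ) := by
  refine ⟨(row₀, sh row₀), ⟨⟨rfl, addable_row hanti h₀ hβ hnot⟩, ?_⟩, ?_⟩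
  · unfold resOf; push_cast; omega
  · rintro ⟨row, c⟩ h
    obtain ⟨hrow, hc, hbb⟩ := addable_char hz hk h
    have := beta_inj hanti hrow h₀ hbb hβ
    subst this
    exact Prod.ext rfl hc

lemma addRes_eq {ℓ : ℕ} {sh : ℕ → ℕ} (hanti : Antitone sh)
    (hz : ∀ row, ℓ ≤ row → sh row = 0) {k : ℕ} (hk : 1 ≤ k)
    {row₀ : ℕ} (h₀ : row₀ < ℓ) (hβ : sh row₀ + (ℓ - row₀) = k)
    (hnot : ¬ ∃ row, row < ℓ ∧ sh row + (ℓ - row) = k + 1) :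
    addRes ℓ sh (k : ℤ) = Function.update sh row₀ (sh row₀ + 1) := by
  have hex : ∃ r, (r = 0 ∨ sh r < sh (r - 1)) ∧ (sh r : ℤ) - (r : ℤ) + (ℓ : ℤ) = (k : ℤ) := by
    refine ⟨row₀, addable_row hanti h₀ hβ hnot, ?_⟩
    push_cast; omega
  unfold addRes
  rw [dif_pos hex]
  have hspec := hex.choose_spec
  have : hex.choose = row₀ := by
    have h' : IsAddableCell sh hex.choose (sh hex.choose) ∧
        resOf ℓ hex.choose (sh hex.choose) = (k : ℤ) := by
      refine ⟨⟨rfl, hspec.1⟩, ?_⟩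
      unfold resOf; linarith [hspec.2]
    obtain ⟨hrow, _, hbb⟩ := addable_char hz hk h'
    exact beta_inj hanti hrow h₀ hbb hβ
  rw [this]

lemma antitone_update {sh : ℕ → ℕ} (hanti : Antitone sh) {row₀ : ℕ}
    (hadd : row₀ = 0 ∨ sh row₀ < sh (row₀ - 1)) :
    Antitone (Function.update sh row₀ (sh row₀ + 1)) := by
  intro a b hab
  simp only [Function.update_apply]
  split_ifs with h1 h2 h2
  · omega
  · -- b = row₀, a ≠ row₀, a ≤ b so a < row₀ hence a ≤ row₀ - 1
    rcases hadd with h0 | hlt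
    · omega
    · have ha : a ≤ row₀ - 1 := by omega
      have h3 := hanti ha
      have h4 : b = row₀ := h1
      omega
  · -- a = row₀, b ≠ row₀, row₀ ≤ b so row₀ < b
    have h3 : row₀ + 1 ≤ b := by omega
    have h4 := hanti h3
    have h5 := hanti (show row₀ ≤ row₀ + 1 by omega)
    omega
  · exact hanti hab


lemma stepAdd_not {ℓ e : ℕ} {k : ℤ} {Tset : Finset ℕ} {M : MultiTableau}
    {t : ℕ} (ht : t ∉ Tset) :
    (stepAdd ℓ k e Tset M).shape t = M.shape t ∧
    (stepAdd ℓ k e Tset M).entry t = M.entry t := by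
  constructor
  · simp [stepAdd, ht]
  · funext row c
    simp [stepAdd, ht]

lemma stepAdd_spec {ℓ k e : ℕ} (hk : 1 ≤ k) {Tset : Finset ℕ} {M : MultiTableau}
    {t : ℕ} (ht : t ∈ Tset)
    (hanti : Antitone (M.shape t)) (hz : ∀ row, ℓ ≤ row → M.shape t row = 0)
    {row₀ : ℕ} (h₀ : row₀ < ℓ) (hβ : M.shape t row₀ + (ℓ - row₀) = k)
    (hnot : ¬ ∃ row, row < ℓ ∧ M.shape t row + (ℓ - row) = k + 1) :
    (stepAdd ℓ (k : ℤ) e Tset M).shape t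
        = Function.update (M.shape t) row₀ (M.shape t row₀ + 1) ∧
    ∀ row c, (stepAdd ℓ (k : ℤ) e Tset M).entry t row c =
      if row = row₀ ∧ c = M.shape t row₀ then e else M.entry t row c := by
  have hres := addRes_eq hanti hz hk h₀ hβ hnot
  constructor
  · simp only [stepAdd, ht, if_pos, hres]
  · intro row c
    simp only [stepAdd, ht, true_and, hres]
    by_cases hrow : row = row₀
    · subst hrow
      simp only [Function.update_self]
      by_cases hc : c = M.shape t row
      · simp [hc]
      · rw [if_neg (by omega), if_neg (by simp [hc])]
    · rw [Function.update_of_ne hrow, if_neg (by omega), if_neg (by simp [hrow])]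

lemma iotaAux_succ {n ℓ m s : ℕ} (P : LadderPresentation n ℓ m s) (f : LadderFlow P)
    (r : ℕ) (h : r < s) :
    iotaAux P f (r + 1)
      = stepAdd ℓ (P.res ⟨r, h⟩ : ℤ) (r + 1) (f.T ⟨r, h⟩) (iotaAux P f r) := by
  simp [iotaAux, h]

/-- The inductive invariant carried along the construction of `ι(P,f)`. -/
structure Inv {n ℓ m s : ℕ} (P : LadderPresentation n ℓ m s) (f : LadderFlow P)
    (r : ℕ) (hr : r ≤ s) : Prop where
  shape_out : ∀ t, (t = 0 ∨ n < t) → ∀ row, (iotaAux P f r).shape t row = 0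
  shape_anti : ∀ t, Antitone ((iotaAux P f r).shape t)
  shape_zero : ∀ t row, ℓ ≤ row → (iotaAux P f r).shape t row = 0
  beta_le : ∀ t row, row < ℓ → (iotaAux P f r).shape t row + (ℓ - row) ≤ m
  mem_S : ∀ t ∈ Finset.Icc 1 n, ∀ p,
    (t ∈ f.S ⟨r, Nat.lt_succ_of_le hr⟩ p ↔
      ∃ row, row < ℓ ∧ (iotaAux P f r).shape t row + (ℓ - row) = p)
  entry_pos : ∀ t row c, InDiag ((iotaAux P f r).shape t) row c →
    1 ≤ (iotaAux P f r).entry t row c ∧ (iotaAux P f r).entry t row c ≤ r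
  entry_zero : ∀ t row c, ¬ InDiag ((iotaAux P f r).shape t) row c →
    (iotaAux P f r).entry t row c = 0
  entry_row : ∀ t row c c', c < c' → InDiag ((iotaAux P f r).shape t) row c' →
    (iotaAux P f r).entry t row c < (iotaAux P f r).entry t row c'
  entry_col : ∀ t row row' c, row < row' → InDiag ((iotaAux P f r).shape t) row' c →
    (iotaAux P f r).entry t row c < (iotaAux P f r).entry t row' c
  entry_inj : ∀ t row c row' c', InDiag ((iotaAux P f r).shape t) row c →
    InDiag ((iotaAux P f r).shape t) row' c' →
    (iotaAux P f r).entry t row c = (iotaAux P f r).entry t row' c' →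
    row = row' ∧ c = c'
  entry_res : ∀ e : Fin s, e.val < r → ∀ t row c,
    InDiag ((iotaAux P f r).shape t) row c →
    (iotaAux P f r).entry t row c = e.val + 1 → resOf ℓ row c = (P.res e : ℤ)
  entry_T : ∀ e : Fin s, e.val < r → ∀ t,
    (t ∈ f.T e ↔ ∃ row c, InDiag ((iotaAux P f r).shape t) row c ∧
      (iotaAux P f r).entry t row c = e.val + 1)

lemma inv_zero {n ℓ m s : ℕ} (P : LadderPresentation n ℓ m s) (f : LadderFlow P)
    (hℓ : 1 ≤ ℓ) (hm : ℓ + 1 ≤ m) : Inv P f 0 (Nat.zero_le s) := by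
  have hsh : ∀ t row, (iotaAux P f 0).shape t row = 0 := fun _ _ => rfl
  have hen : ∀ t row c, (iotaAux P f 0).entry t row c = 0 := fun _ _ _ => rfl
  refine ⟨fun t _ row => rfl, fun t => ?_, fun t row _ => rfl, ?_, ?_, ?_, ?_, ?_, ?_, ?_,
    ?_, ?_⟩
  · intro a b _; simp [hsh]
  · intro t row h; simp only [hsh]; omega
  · intro t htn p
    have e0 : (⟨0, Nat.lt_succ_of_le (Nat.zero_le s)⟩ : Fin (s+1)) = 0 := by
      exact Fin.ext (by simp)
    rw [e0]
    constructor
    · intro hp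
      by_cases h0 : p = 0 ∨ m < p
      · rw [f.S_outside _ _ h0] at hp; simp at hp
      · push_neg at h0
        rw [f.S_init p (by omega) (by omega)] at hp
        by_cases hpl : p ≤ ℓ
        · exact ⟨ℓ - p, by omega, by simp [hsh]; omega⟩
        · simp [hpl] at hp
    · rintro ⟨row, hrow, hb⟩
      simp only [hsh] at hb
      rw [f.S_init p (by omega) (by omega)]
      rw [if_pos (by omega)]
      exact htn
  · intro t row c h; exact absurd h (by simp [InDiag, hsh])
  · intro t row c _; exact hen t row c
  · intro t row c c' _ h; exact absurd h (by simp [InDiag, hsh])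
  · intro t row row' c _ h; exact absurd h (by simp [InDiag, hsh])
  · intro t row c row' c' h; exact absurd h (by simp [InDiag, hsh])
  · intro e he; omega
  · intro e he; omega


lemma inv_succ {n ℓ m s : ℕ} (P : LadderPresentation n ℓ m s) (f : LadderFlow P)
    (hℓ : 1 ≤ ℓ) (hm : ℓ + 1 ≤ m) (r : ℕ) (hr : r < s)
    (ih : Inv P f r hr.le) : Inv P f (r + 1) hr := by
  have hM1 := iotaAux_succ P f r hr
  have ecast : ((⟨r, hr⟩ : Fin s).castSucc : Fin (s+1))
      = ⟨r, Nat.lt_succ_of_le hr.le⟩ := rfl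
  have esucc : ((⟨r, hr⟩ : Fin s).succ : Fin (s+1))
      = ⟨r + 1, Nat.succ_lt_succ hr⟩ := rfl
  have hi1 : 1 ≤ P.res ⟨r, hr⟩ := P.res_pos _
  have him : P.res ⟨r, hr⟩ < m := P.res_lt _
  have hTn : ∀ t ∈ f.T ⟨r, hr⟩, t ∈ Finset.Icc 1 n := by
    intro t ht
    exact f.S_sub _ _ (f.T_sub _ ht)
  have key : ∀ t ∈ f.T ⟨r, hr⟩, ∃ row₀, row₀ < ℓ ∧
      (iotaAux P f r).shape t row₀ + (ℓ - row₀) = P.res ⟨r, hr⟩ ∧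
      ¬ ∃ row, row < ℓ ∧ (iotaAux P f r).shape t row + (ℓ - row) = P.res ⟨r, hr⟩ + 1 := by
    intro t ht
    have htS : t ∈ f.S ⟨r, Nat.lt_succ_of_le hr.le⟩ (P.res ⟨r, hr⟩) := by
      rw [← ecast]; exact f.T_sub _ ht
    obtain ⟨row₀, h1, h2⟩ := (ih.mem_S t (hTn t ht) _).mp htS
    refine ⟨row₀, h1, h2, ?_⟩
    rintro ⟨row, hrow, hb⟩
    have : t ∈ f.S ⟨r, Nat.lt_succ_of_le hr.le⟩ (P.res ⟨r, hr⟩ + 1) :=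
      (ih.mem_S t (hTn t ht) _).mpr ⟨row, hrow, hb⟩
    rw [← ecast] at this
    exact (Finset.disjoint_left.mp (f.T_disj ⟨r, hr⟩) ht) this
  have spec : ∀ t ∈ f.T ⟨r, hr⟩, ∃ row₀, row₀ < ℓ ∧
      (iotaAux P f r).shape t row₀ + (ℓ - row₀) = P.res ⟨r, hr⟩ ∧
      (row₀ = 0 ∨ (iotaAux P f r).shape t row₀ < (iotaAux P f r).shape t (row₀ - 1)) ∧
      (iotaAux P f (r+1)).shape t
        = Function.update ((iotaAux P f r).shape t) row₀
            ((iotaAux P f r).shape t row₀ + 1) ∧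
      (∀ row c, (iotaAux P f (r+1)).entry t row c =
        if row = row₀ ∧ c = (iotaAux P f r).shape t row₀ then r + 1
        else (iotaAux P f r).entry t row c) ∧
      (∀ row, row < ℓ → row ≠ row₀ →
        (iotaAux P f r).shape t row + (ℓ - row) ≠ P.res ⟨r, hr⟩) := by
    intro t ht
    obtain ⟨row₀, h1, h2, hnot⟩ := key t ht
    obtain ⟨hs, he⟩ := stepAdd_spec hi1 ht (ih.shape_anti t)
      (fun row h => ih.shape_zero t row h) h1 h2 hnot
    rw [hM1]
    refine ⟨row₀, h1, h2, addable_row (ih.shape_anti t) h1 h2 hnot, hs, he, ?_⟩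
    intro row hrow hne hb
    exact hne (beta_inj (ih.shape_anti t) hrow h1 hb h2)
  have specn : ∀ t, t ∉ f.T ⟨r, hr⟩ →
      (iotaAux P f (r+1)).shape t = (iotaAux P f r).shape t ∧
      (iotaAux P f (r+1)).entry t = (iotaAux P f r).entry t := by
    intro t ht
    rw [hM1]
    exact stepAdd_not ht
  -- growth of shapes and preservation of old entries
  have hgrow : ∀ t row,
      (iotaAux P f r).shape t row ≤ (iotaAux P f (r+1)).shape t row := by
    intro t row
    by_cases ht : t ∈ f.T ⟨r, hr⟩
    · obtain ⟨row₀, -, -, -, hs, -, -⟩ := spec t ht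
      rw [hs, Function.update_apply]
      split_ifs with h
      · subst h; omega
      · exact le_rfl
    · rw [(specn t ht).1]
  have hold : ∀ t row c, InDiag ((iotaAux P f r).shape t) row c →
      (iotaAux P f (r+1)).entry t row c = (iotaAux P f r).entry t row c := by
    intro t row c hd
    by_cases ht : t ∈ f.T ⟨r, hr⟩
    · obtain ⟨row₀, -, -, -, -, he, -⟩ := spec t ht
      rw [he]
      rcases Decidable.em (row = row₀ ∧ c = (iotaAux P f r).shape t row₀) with h | h
      · exfalso
        obtain ⟨h1, h2⟩ := h
        subst h1
        simp only [InDiag] at hd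
        omega
      · rw [if_neg h]
    · rw [(specn t ht).2]
  -- characterisation of the new diagram for t ∈ T
  have hdiag : ∀ t (ht : t ∈ f.T ⟨r, hr⟩) row₀,
      (iotaAux P f (r+1)).shape t
        = Function.update ((iotaAux P f r).shape t) row₀
            ((iotaAux P f r).shape t row₀ + 1) →
      ∀ row c, (InDiag ((iotaAux P f (r+1)).shape t) row c ↔
        (InDiag ((iotaAux P f r).shape t) row c ∨
          (row = row₀ ∧ c = (iotaAux P f r).shape t row₀))) := by
    intro t ht row₀ hs row c
    rw [hs]
    simp only [InDiag, Function.update_apply]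
    split_ifs with h
    · subst h; constructor
      · intro hc
        omega
      · intro hc; omega
    · constructor
      · intro hc; exact Or.inl hc
      · rintro (hc | ⟨h1, -⟩)
        · exact hc
        · exact absurd h1 h
  refine ⟨?_, ?_, ?_, ?_, ?_, ?_, ?_, ?_, ?_, ?_, ?_, ?_⟩
  -- shape_out
  · intro t hto row
    have htn : t ∉ f.T ⟨r, hr⟩ := by
      intro h
      have := hTn t h
      simp only [Finset.mem_Icc] at this
      omega
    rw [(specn t htn).1]
    exact ih.shape_out t hto row
  -- shape_anti
  · intro t
    by_cases ht : t ∈ f.T ⟨r, hr⟩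
    · obtain ⟨row₀, -, -, hadd, hs, -, -⟩ := spec t ht
      rw [hs]
      exact antitone_update (ih.shape_anti t) hadd
    · rw [(specn t ht).1]
      exact ih.shape_anti t
  -- shape_zero
  · intro t row hrow
    by_cases ht : t ∈ f.T ⟨r, hr⟩
    · obtain ⟨row₀, h1, -, -, hs, -, -⟩ := spec t ht
      rw [hs, Function.update_of_ne (by omega)]
      exact ih.shape_zero t row hrow
    · rw [(specn t ht).1]
      exact ih.shape_zero t row hrow
  -- beta_le
  · intro t row hrow
    by_cases ht : t ∈ f.T ⟨r, hr⟩
    · obtain ⟨row₀, h1, h2, -, hs, -, -⟩ := spec t ht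
      rw [hs, Function.update_apply]
      split_ifs with h
      · subst h
        omega
      · exact ih.beta_le t row hrow
    · rw [(specn t ht).1]
      exact ih.beta_le t row hrow
  -- mem_S
  · intro t htn p
    have hres := f.S_step_res ⟨r, hr⟩
    have hres1 := f.S_step_res1 ⟨r, hr⟩
    have hoth := f.S_step_other ⟨r, hr⟩
    rw [ecast] at hres hres1 hoth
    have main : t ∈ f.S ((⟨r, hr⟩ : Fin s).succ) p ↔
        ∃ row, row < ℓ ∧ (iotaAux P f (r+1)).shape t row + (ℓ - row) = p := by
      by_cases ht : t ∈ f.T ⟨r, hr⟩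
      · obtain ⟨row₀, h1, h2, -, hs, -, huniq⟩ := spec t ht
        have hβ : ∀ row, (iotaAux P f (r+1)).shape t row =
            if row = row₀ then (iotaAux P f r).shape t row₀ + 1
            else (iotaAux P f r).shape t row := by
          intro row
          rw [hs, Function.update_apply]
        by_cases hp : p = P.res ⟨r, hr⟩
        · subst hp
          rw [hres]
          simp only [Finset.mem_sdiff]
          constructor
          · rintro ⟨-, hnt⟩
            exact absurd ht hnt
          · rintro ⟨row, hrow, hb⟩
            exfalso
            rw [hβ row] at hb
            by_cases hr0 : row = row₀
            · subst hr0
              rw [if_pos rfl] at hb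
              omega
            · rw [if_neg hr0] at hb
              exact huniq row hrow hr0 hb
        · by_cases hp1 : p = P.res ⟨r, hr⟩ + 1
          · subst hp1
            rw [hres1]
            simp only [Finset.mem_union]
            constructor
            · intro _
              exact ⟨row₀, h1, by rw [hβ row₀, if_pos rfl]; omega⟩
            · intro _
              exact Or.inr ht
          · rw [hoth p hp hp1, ih.mem_S t htn p]
            constructor
            · rintro ⟨row, hrow, hb⟩
              have hne : row ≠ row₀ := by
                intro h0
                subst h0
                omega
              exact ⟨row, hrow, by rw [hβ row, if_neg hne]; exact hb⟩
            · rintro ⟨row, hrow, hb⟩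
              rw [hβ row] at hb
              by_cases h0 : row = row₀
              · subst h0
                rw [if_pos rfl] at hb
                exfalso
                exact hp1 (by omega)
              · rw [if_neg h0] at hb
                exact ⟨row, hrow, hb⟩
      · have hshape : ∀ row, (iotaAux P f (r+1)).shape t row
            = (iotaAux P f r).shape t row := by
          intro row
          rw [(specn t ht).1]
        by_cases hp : p = P.res ⟨r, hr⟩
        · subst hp
          rw [hres]
          simp only [Finset.mem_sdiff]
          constructor
          · rintro ⟨hS, -⟩
            obtain ⟨row, hrow, hb⟩ := (ih.mem_S t htn _).mp hS
            exact ⟨row, hrow, by rw [hshape row]; exact hb⟩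
          · rintro ⟨row, hrow, hb⟩
            rw [hshape row] at hb
            exact ⟨(ih.mem_S t htn _).mpr ⟨row, hrow, hb⟩, ht⟩
        · by_cases hp1 : p = P.res ⟨r, hr⟩ + 1
          · subst hp1
            rw [hres1]
            simp only [Finset.mem_union]
            constructor
            · rintro (hS | hT)
              · obtain ⟨row, hrow, hb⟩ := (ih.mem_S t htn _).mp hS
                exact ⟨row, hrow, by rw [hshape row]; exact hb⟩
              · exact absurd hT ht
            · rintro ⟨row, hrow, hb⟩
              rw [hshape row] at hb
              exact Or.inl ((ih.mem_S t htn _).mpr ⟨row, hrow, hb⟩)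
          · rw [hoth p hp hp1, ih.mem_S t htn p]
            constructor
            · rintro ⟨row, hrow, hb⟩
              exact ⟨row, hrow, by rw [hshape row]; exact hb⟩
            · rintro ⟨row, hrow, hb⟩
              rw [hshape row] at hb
              exact ⟨row, hrow, hb⟩
    exact main
  -- entry_pos
  · intro t row c hd
    by_cases ht : t ∈ f.T ⟨r, hr⟩
    · obtain ⟨row₀, h1, h2, -, hs, he, -⟩ := spec t ht
      rcases (hdiag t ht row₀ hs row c).mp hd with hdo | ⟨rfl, rfl⟩
      · rw [hold t row c hdo]
        have := ih.entry_pos t row c hdo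
        omega
      · rw [he _ _, if_pos ⟨rfl, rfl⟩]
        omega
    · rw [(specn t ht).2]
      rw [(specn t ht).1] at hd
      have := ih.entry_pos t row c hd
      omega
  -- entry_zero
  · intro t row c hd
    have hdo : ¬ InDiag ((iotaAux P f r).shape t) row c := by
      intro h
      apply hd
      simp only [InDiag] at h ⊢
      exact lt_of_lt_of_le h (hgrow t row)
    by_cases ht : t ∈ f.T ⟨r, hr⟩
    · obtain ⟨row₀, h1, h2, -, hs, he, -⟩ := spec t ht
      have hne : ¬(row = row₀ ∧ c = (iotaAux P f r).shape t row₀) := by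
        rintro ⟨ha, hb2⟩
        exact hd ((hdiag t ht row₀ hs _ _).mpr (Or.inr ⟨ha, hb2⟩))
      rw [he _ _, if_neg hne]
      exact ih.entry_zero t row c hdo
    · rw [(specn t ht).2]
      exact ih.entry_zero t row c hdo
  -- entry_row
  · intro t row c c' hcc hd'
    by_cases ht : t ∈ f.T ⟨r, hr⟩
    · obtain ⟨row₀, h1, h2, -, hs, he, -⟩ := spec t ht
      rcases (hdiag t ht row₀ hs row c').mp hd' with hdo' | ⟨rfl, rfl⟩
      · have hdo : InDiag ((iotaAux P f r).shape t) row c := by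
          simp only [InDiag] at hdo' ⊢
          omega
        rw [hold t row c hdo, hold t row c' hdo']
        exact ih.entry_row t row c c' hcc hdo'
      · have hdo : InDiag ((iotaAux P f r).shape t) row c := hcc
        rw [hold t row c hdo, he _ _, if_pos ⟨rfl, rfl⟩]
        have := ih.entry_pos t row c hdo
        omega
    · rw [(specn t ht).2]
      rw [(specn t ht).1] at hd'
      exact ih.entry_row t row c c' hcc hd'
  -- entry_col
  · intro t row row' c hrr hd'
    by_cases ht : t ∈ f.T ⟨r, hr⟩
    · obtain ⟨row₀, h1, h2, hadd, hs, he, -⟩ := spec t ht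
      rcases (hdiag t ht row₀ hs row' c).mp hd' with hdo' | ⟨rfl, rfl⟩
      · have hdo : InDiag ((iotaAux P f r).shape t) row c := by
          have := ih.shape_anti t (le_of_lt hrr)
          simp only [InDiag] at hdo' ⊢
          omega
        rw [hold t row c hdo, hold t row' c hdo']
        exact ih.entry_col t row row' c hrr hdo'
      · have hlt : (iotaAux P f r).shape t row' <
            (iotaAux P f r).shape t (row' - 1) := by
          rcases hadd with h0 | h0
          · omega
          · exact h0
        have hdo : InDiag ((iotaAux P f r).shape t) row
            ((iotaAux P f r).shape t row') := by
          have := ih.shape_anti t (show row ≤ row' - 1 by omega)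
          simp only [InDiag]
          omega
        rw [hold t row _ hdo, he _ _, if_pos ⟨rfl, rfl⟩]
        have := ih.entry_pos t row _ hdo
        omega
    · rw [(specn t ht).2]
      rw [(specn t ht).1] at hd'
      exact ih.entry_col t row row' c hrr hd'
  -- entry_inj
  · intro t row c row' c' hd hd' heq
    by_cases ht : t ∈ f.T ⟨r, hr⟩
    · obtain ⟨row₀, h1, h2, -, hs, he, -⟩ := spec t ht
      rcases (hdiag t ht row₀ hs row c).mp hd with hdo | hnew
      · rcases (hdiag t ht row₀ hs row' c').mp hd' with hdo' | hnew'
        · rw [hold t row c hdo, hold t row' c' hdo'] at heq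
          exact ih.entry_inj t row c row' c' hdo hdo' heq
        · obtain ⟨rfl, rfl⟩ := hnew'
          rw [hold t row c hdo, he _ _, if_pos ⟨rfl, rfl⟩] at heq
          have := ih.entry_pos t row c hdo
          omega
      · obtain ⟨ha, hb2⟩ := hnew
        rcases (hdiag t ht row₀ hs row' c').mp hd' with hdo' | hnew'
        · rw [hold t row' c' hdo', he row c, if_pos ⟨ha, hb2⟩] at heq
          have := ih.entry_pos t row' c' hdo'
          omega
        · obtain ⟨ha', hb2'⟩ := hnew'
          exact ⟨ha.trans ha'.symm, hb2.trans hb2'.symm⟩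
    · rw [(specn t ht).1] at hd hd'
      rw [(specn t ht).2] at heq
      exact ih.entry_inj t row c row' c' hd hd' heq
  -- entry_res
  · intro e he t row c hd hent
    by_cases ht : t ∈ f.T ⟨r, hr⟩
    · obtain ⟨row₀, h1, h2, -, hs, hee, -⟩ := spec t ht
      rcases (hdiag t ht row₀ hs row c).mp hd with hdo | ⟨rfl, rfl⟩
      · rw [hold t row c hdo] at hent
        have hb := ih.entry_pos t row c hdo
        have he' : e.val < r := by omega
        exact ih.entry_res e he' t row c hdo hent
      · rw [hee _ _, if_pos ⟨rfl, rfl⟩] at hent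
        have heq : e = ⟨r, hr⟩ := Fin.ext (show e.val = r by omega)
        subst heq
        unfold resOf
        omega
    · rw [(specn t ht).2] at hent
      rw [(specn t ht).1] at hd
      have hb := ih.entry_pos t row c hd
      have he' : e.val < r := by omega
      exact ih.entry_res e he' t row c hd hent
  -- entry_T
  · intro e he t
    by_cases ht : t ∈ f.T ⟨r, hr⟩
    · obtain ⟨row₀, h1, h2, -, hs, hee, -⟩ := spec t ht
      by_cases her : e.val = r
      · have heq : e = ⟨r, hr⟩ := Fin.ext her
        constructor
        · intro _
          refine ⟨row₀, (iotaAux P f r).shape t row₀, ?_, ?_⟩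
          · exact (hdiag t ht row₀ hs _ _).mpr (Or.inr ⟨rfl, rfl⟩)
          · rw [hee _ _, if_pos ⟨rfl, rfl⟩]
            omega
        · intro _
          rw [heq]
          exact ht
      · have he' : e.val < r := by omega
        constructor
        · intro hTe
          obtain ⟨row, c, hdo, hen⟩ := (ih.entry_T e he' t).mp hTe
          exact ⟨row, c, (hdiag t ht row₀ hs _ _).mpr (Or.inl hdo),
            by rw [hold t row c hdo]; exact hen⟩
        · rintro ⟨row, c, hd, hen⟩
          rcases (hdiag t ht row₀ hs row c).mp hd with hdo | ⟨rfl, rfl⟩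
          · rw [hold t row c hdo] at hen
            exact (ih.entry_T e he' t).mpr ⟨row, c, hdo, hen⟩
          · rw [hee _ _, if_pos ⟨rfl, rfl⟩] at hen
            omega
    · have hsn := (specn t ht).1
      have hen' := (specn t ht).2
      by_cases her : e.val = r
      · have heq : e = ⟨r, hr⟩ := Fin.ext her
        constructor
        · intro hTe
          rw [heq] at hTe
          exact absurd hTe ht
        · rintro ⟨row, c, hd, hen⟩
          rw [hsn] at hd
          rw [hen'] at hen
          have := (ih.entry_pos t row c hd).2
          omega
      · have he' : e.val < r := by omega
        constructor
        · intro hTe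
          obtain ⟨row, c, hdo, hen⟩ := (ih.entry_T e he' t).mp hTe
          refine ⟨row, c, ?_, ?_⟩
          · rw [hsn]
            exact hdo
          · rw [hen']
            exact hen
        · rintro ⟨row, c, hd, hen⟩
          rw [hsn] at hd
          rw [hen'] at hen
          exact (ih.entry_T e he' t).mpr ⟨row, c, hd, hen⟩

lemma inv_all {n ℓ m s : ℕ} (P : LadderPresentation n ℓ m s) (f : LadderFlow P)
    (hℓ : 1 ≤ ℓ) (hm : ℓ + 1 ≤ m) : ∀ r (hr : r ≤ s), Inv P f r hr := by
  intro r
  induction r with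
  | zero => intro _; exact inv_zero P f hℓ hm
  | succ r ihr => intro hr; exact inv_succ P f hℓ hm r hr (ihr (le_of_lt hr))

lemma part_one {n ℓ m s : ℕ} (P : LadderPresentation n ℓ m s) (f : LadderFlow P)
    (hℓ : 1 ≤ ℓ) (hm : ℓ + 1 ≤ m) (r : Fin s) (t : ℕ) (ht : t ∈ f.T r) :
    ∃! rc : ℕ × ℕ, IsAddableCell ((iotaAux P f r.val).shape t) rc.1 rc.2 ∧
      resOf ℓ rc.1 rc.2 = (P.res r : ℤ) := by
  have ih := inv_all P f hℓ hm r.val (le_of_lt r.isLt)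
  have htn : t ∈ Finset.Icc 1 n := f.S_sub _ _ (f.T_sub r ht)
  obtain ⟨row₀, h1, h2⟩ := (ih.mem_S t htn _).mp (f.T_sub r ht)
  have hnot : ¬∃ row, row < ℓ ∧
      (iotaAux P f r.val).shape t row + (ℓ - row) = P.res r + 1 := by
    rintro ⟨row, hrow, hb⟩
    exact Finset.disjoint_left.mp (f.T_disj r) ht
      ((ih.mem_S t htn _).mpr ⟨row, hrow, hb⟩)
  exact existsUnique_addable (ih.shape_anti t) (fun row h => ih.shape_zero t row h)
    (P.res_pos r) h1 h2 hnot

lemma part_two {n ℓ m s : ℕ} (P : LadderPresentation n ℓ m s) (f : LadderFlow P)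
    (hℓ : 1 ≤ ℓ) (hm : ℓ + 1 ≤ m) :
    IsStandard n ℓ s (iotaMap P f) ∧
    ∀ r : Fin s,
      (∀ t ∈ f.T r, ∃! rc : ℕ × ℕ,
        InDiag ((iotaMap P f).shape t) rc.1 rc.2 ∧
          (iotaMap P f).entry t rc.1 rc.2 = r.val + 1) ∧
      (∀ t, t ∉ f.T r → ∀ r' c, (iotaMap P f).entry t r' c ≠ r.val + 1) ∧
      (∀ t r' c, InDiag ((iotaMap P f).shape t) r' c →
        (iotaMap P f).entry t r' c = r.val + 1 → resOf ℓ r' c = (P.res r : ℤ)) := by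
  have inv := inv_all P f hℓ hm s le_rfl
  have hMdef : iotaMap P f = iotaAux P f s := rfl
  rw [hMdef]
  constructor
  · refine ⟨?_, ?_, ?_, ?_, ?_, ?_, ?_, ?_⟩
    · intro t
      exact ⟨inv.shape_anti t, ⟨ℓ, inv.shape_zero t ℓ le_rfl⟩⟩
    · exact inv.shape_out
    · intro t r c hd
      exact inv.entry_pos t r c hd
    · exact inv.entry_zero
    · exact inv.entry_row
    · exact inv.entry_col
    · exact inv.entry_inj
    · intro t r c t' r' c' hd hd' heq
      obtain ⟨hp1, hp2⟩ := inv.entry_pos t r c hd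
      have e1 := inv.entry_res ⟨(iotaAux P f s).entry t r c - 1, by omega⟩ (by
        show (iotaAux P f s).entry t r c - 1 < s
        omega) t r c hd (by
        show (iotaAux P f s).entry t r c = (iotaAux P f s).entry t r c - 1 + 1
        omega)
      have e2 := inv.entry_res ⟨(iotaAux P f s).entry t r c - 1, by
        show (iotaAux P f s).entry t r c - 1 < s
        omega⟩ (by
        show (iotaAux P f s).entry t r c - 1 < s
        omega) t' r' c' hd' (by
        show (iotaAux P f s).entry t' r' c' = (iotaAux P f s).entry t r c - 1 + 1
        omega)
      exact e1.trans e2.symm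
  · intro r
    refine ⟨?_, ?_, ?_⟩
    · intro t ht
      obtain ⟨row, c, hd, hen⟩ := (inv.entry_T r r.isLt t).mp ht
      refine ⟨(row, c), ⟨hd, hen⟩, ?_⟩
      rintro ⟨row', c'⟩ ⟨hd', hen'⟩
      obtain ⟨e1, e2⟩ := inv.entry_inj t row' c' row c hd' hd (hen'.trans hen.symm)
      simp [e1, e2]
    · intro t ht row c hen
      by_cases hd : InDiag ((iotaAux P f s).shape t) row c
      · exact ht ((inv.entry_T r r.isLt t).mpr ⟨row, c, hd, hen⟩)
      · rw [inv.entry_zero t row c hd] at hen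
        omega
    · intro t row c hd hen
      exact inv.entry_res r r.isLt t row c hd hen

lemma LP_ext {n ℓ m s : ℕ} {P P' : LadderPresentation n ℓ m s}
    (h1 : P.res = P'.res) (h2 : P.mult = P'.mult) : P = P' := by
  cases P
  cases P'
  have h1' : _ = _ := h1
  have h2' : _ = _ := h2
  subst h1'
  subst h2'
  rfl

lemma LF_ext {n ℓ m s : ℕ} {P : LadderPresentation n ℓ m s} {f f' : LadderFlow P}
    (h1 : f.S = f'.S) (h2 : f.T = f'.T) : f = f' := by
  cases f
  cases f'
  have h1' : _ = _ := h1
  have h2' : _ = _ := h2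
  subst h1'
  subst h2'
  rfl

end Aux
/-!
STATEMENT 0: Flows to fillings (well-definedness and injectivity of `ι`).
(i) At every step `r` and for every `t ∈ T_r`, the component built so far in
position `t` has exactly one addable node of residue `i_r`, so `ι(P,f)` is well
defined.  (ii) `ι(P,f)` is a standard `n`-multitableau with entries in
`{1,…,s}`, in which the nodes with entry `r` are exactly `j_r` nodes of residue
`i_r`, one in each component `t ∈ T_r`.  (iii) `ι` is injective.
-/
theorem flows_to_fillings (n ℓ m : ℕ) (hn : 2 ≤ n) (hℓ : 1 ≤ ℓ) (hm : ℓ + 1 ≤ m) :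
    (∀ (s : ℕ) (P : LadderPresentation n ℓ m s), IsValid P → ∀ f : LadderFlow P,
      ∀ r : Fin s, ∀ t ∈ f.T r,
        ∃! rc : ℕ × ℕ,
          IsAddableCell ((iotaAux P f r.val).shape t) rc.1 rc.2 ∧
            resOf ℓ rc.1 rc.2 = (P.res r : ℤ)) ∧
    (∀ (s : ℕ) (P : LadderPresentation n ℓ m s), IsValid P → ∀ f : LadderFlow P,
      IsStandard n ℓ s (iotaMap P f) ∧
      ∀ r : Fin s,
        (∀ t ∈ f.T r, ∃! rc : ℕ × ℕ,
          InDiag ((iotaMap P f).shape t) rc.1 rc.2 ∧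
            (iotaMap P f).entry t rc.1 rc.2 = r.val + 1) ∧
        (∀ t, t ∉ f.T r → ∀ r' c, (iotaMap P f).entry t r' c ≠ r.val + 1) ∧
        (∀ t r' c, InDiag ((iotaMap P f).shape t) r' c →
          (iotaMap P f).entry t r' c = r.val + 1 → resOf ℓ r' c = (P.res r : ℤ))) ∧
    (∀ (s s' : ℕ) (P : LadderPresentation n ℓ m s) (P' : LadderPresentation n ℓ m s'),
      IsValid P → IsValid P' → ∀ (f : LadderFlow P) (f' : LadderFlow P'),
        iotaMap P f = iotaMap P' f' → s = s' ∧ HEq P P' ∧ HEq f f') := by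
  refine ⟨?_, ?_, ?_⟩
  · intro s P _ f r t ht
    exact part_one P f hℓ hm r t ht
  · intro s P _ f
    exact part_two P f hℓ hm
  · intro s s' P P' _ _ f f' hMM
    have occ : ∀ (s₀ : ℕ) (P₀ : LadderPresentation n ℓ m s₀) (f₀ : LadderFlow P₀)
        (e : ℕ), 1 ≤ e → e ≤ s₀ → ∃ t row c,
          InDiag ((iotaMap P₀ f₀).shape t) row c ∧
          (iotaMap P₀ f₀).entry t row c = e := by
      intro s₀ P₀ f₀ e he1 he2
      have hT := (part_two P₀ f₀ hℓ hm).2 ⟨e - 1, by omega⟩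
      have hpos : 0 < (f₀.T ⟨e - 1, by omega⟩).card := by
        rw [f₀.T_card]
        exact P₀.mult_pos _
      obtain ⟨t, ht⟩ := Finset.card_pos.mp hpos
      obtain ⟨rc, ⟨hd, hen⟩, -⟩ := hT.1 t ht
      exact ⟨t, rc.1, rc.2, hd, by
        rw [hen]
        show e - 1 + 1 = e
        omega⟩
    have hss : s = s' := by
      by_contra hne
      rcases Nat.lt_or_ge s s' with h | h
      · obtain ⟨t, row, c, hd, hen⟩ := occ s' P' f' (s + 1) (by omega) (by omega)
        rw [← hMM] at hd hen
        have := ((part_two P f hℓ hm).1).2.2.1 t row c hd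
        omega
      · have h' : s' < s := by omega
        obtain ⟨t, row, c, hd, hen⟩ := occ s P f (s' + 1) (by omega) (by omega)
        rw [hMM] at hd hen
        have := ((part_two P' f' hℓ hm).1).2.2.1 t row c hd
        omega
    subst hss
    have inv := inv_all P f hℓ hm s le_rfl
    have inv' := inv_all P' f' hℓ hm s le_rfl
    have hMM' : iotaAux P f s = iotaAux P' f' s := hMM
    have hT : ∀ r : Fin s, f.T r = f'.T r := by
      intro r
      ext t
      rw [inv.entry_T r r.isLt t, inv'.entry_T r r.isLt t, hMM']
    have hres : ∀ r : Fin s, P.res r = P'.res r := by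
      intro r
      have hpos : 0 < (f.T r).card := by
        rw [f.T_card]
        exact P.mult_pos r
      obtain ⟨t, ht⟩ := Finset.card_pos.mp hpos
      obtain ⟨row, c, hd, hen⟩ := (inv.entry_T r r.isLt t).mp ht
      have e1 : resOf ℓ row c = (P.res r : ℤ) := inv.entry_res r r.isLt t row c hd hen
      have hd' : InDiag ((iotaAux P' f' s).shape t) row c := by
        rw [← hMM']
        exact hd
      have hen' : (iotaAux P' f' s).entry t row c = r.val + 1 := by
        rw [← hMM']
        exact hen
      have e2 : resOf ℓ row c = (P'.res r : ℤ) := inv'.entry_res r r.isLt t row c hd' hen'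
      have e3 : (P.res r : ℤ) = (P'.res r : ℤ) := by rw [← e1, e2]
      exact_mod_cast e3
    have hmult : ∀ r : Fin s, P.mult r = P'.mult r := by
      intro r
      rw [← f.T_card r, ← f'.T_card r, hT r]
    have hPP : P = P' := LP_ext (funext hres) (funext hmult)
    subst hPP
    have hS : f.S = f'.S := by
      have main : ∀ (k : ℕ) (hk : k < s + 1) (p : ℕ),
          f.S ⟨k, hk⟩ p = f'.S ⟨k, hk⟩ p := by
        intro k
        induction k with
        | zero =>
          intro hk p
          by_cases h0 : p = 0 ∨ m < p
          · rw [f.S_outside _ _ h0, f'.S_outside _ _ h0]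
          · push_neg at h0
            have e0 : (⟨0, hk⟩ : Fin (s + 1)) = 0 := Fin.ext (by simp)
            rw [e0, f.S_init p (by omega) (by omega), f'.S_init p (by omega) (by omega)]
        | succ k ihk =>
          intro hk p
          have hks : k < s := by omega
          have ecast : ((⟨k, hks⟩ : Fin s).castSucc : Fin (s + 1))
              = ⟨k, by omega⟩ := rfl
          have esucc : ((⟨k, hks⟩ : Fin s).succ : Fin (s + 1)) = ⟨k + 1, hk⟩ := rfl
          by_cases hp : p = P.res ⟨k, hks⟩
          · subst hp
            have a1 := f.S_step_res ⟨k, hks⟩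
            have a2 := f'.S_step_res ⟨k, hks⟩
            rw [ecast, esucc] at a1 a2
            rw [a1, a2, ihk (by omega) _, hT ⟨k, hks⟩]
          · by_cases hp1 : p = P.res ⟨k, hks⟩ + 1
            · subst hp1
              have a1 := f.S_step_res1 ⟨k, hks⟩
              have a2 := f'.S_step_res1 ⟨k, hks⟩
              rw [ecast, esucc] at a1 a2
              rw [a1, a2, ihk (by omega) _, hT ⟨k, hks⟩]
            · have a1 := f.S_step_other ⟨k, hks⟩ p hp hp1
              have a2 := f'.S_step_other ⟨k, hks⟩ p hp hp1
              rw [ecast, esucc] at a1 a2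
              rw [a1, a2, ihk (by omega) _]
      funext rF p
      have := main rF.val rF.isLt p
      exact this
    have hff : f = f' := LF_ext hS (funext hT)
    exact ⟨rfl, heq_of_eq rfl, heq_of_eq hff⟩


end

end SlnWeb
end

section
/- Extended growth algorithm (well-definedness and injectivity of g). Let T be a standard n-multitableau with entries in {1,…,s}, each entry occurring at least once, all of whose nodes have residue in {1,…,m−1}. Let i_r be the common residue and j_r the number of the nodes with entry r, and define g(T) as the ladder presentation P_T = ((i_1,j_1),…,(i_s,j_s)) together with the subsets T_r := { t : the t-th component of T contains a node with entry r } and the tuples S^{(r)} forced by the flow conditions. Then: (i) P_T is a valid ladder presentation and (S^{(•)}, T_•) is a flow on P_T (in particular at each step T_r ⊆ S^{(r−1)}_{i_r}, T_r ∩ S^{(r−1)}_{i_r+1} = ∅ and |T_r| = j_r); (ii) g is injective: g(T) = g(T′) implies T = T′. -/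
open scoped Classical

namespace SlnWeb

noncomputable section

section GrowthProof

/-- `a = b` if they have the same predecessors. -/
private lemma nat_eq_of_lt_iff {a b : ℕ} (h : ∀ c, c < a ↔ c < b) : a = b := by
  rcases Nat.lt_trichotomy a b with h' | h' | h'
  · exact absurd ((h a).2 h') (lt_irrefl a)
  · exact h'
  · exact absurd ((h b).1 h') (lt_irrefl b)

private lemma nat_le_of_lt_imp {a b : ℕ} (h : ∀ c, c < a → c < b) : a ≤ b := by
  by_contra h'
  push_neg at h'
  exact absurd (h b h') (lt_irrefl b)

/-- Cardinality of a downward-closed subset of `range N`. -/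
private lemma card_filter_lower {N : ℕ} {Q : ℕ → Prop} [DecidablePred Q]
    (hdc : ∀ c c', c ≤ c' → c' < N → Q c' → Q c) (c : ℕ) :
    c < ((Finset.range N).filter fun x => Q x).card ↔ c < N ∧ Q c := by
  constructor
  · intro h
    by_contra hc
    have hsub : ((Finset.range N).filter fun x => Q x) ⊆ Finset.range c := by
      intro x hx
      simp only [Finset.mem_filter, Finset.mem_range] at hx ⊢
      by_contra hxc
      push_neg at hxc
      exact hc ⟨lt_of_le_of_lt hxc hx.1, hdc c x hxc hx.1 hx.2⟩
    have h2 := Finset.card_le_card hsub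
    rw [Finset.card_range] at h2
    omega
  · rintro ⟨h1, h2⟩
    have hsub : Finset.range (c + 1) ⊆ (Finset.range N).filter fun x => Q x := by
      intro x hx
      simp only [Finset.mem_range] at hx
      simp only [Finset.mem_filter, Finset.mem_range]
      exact ⟨by omega, hdc x c (by omega) h1 h2⟩
    have h2' := Finset.card_le_card hsub
    rw [Finset.card_range] at h2'
    omega

private lemma bval_inj {q : ℕ → ℕ} (hq : Antitone q) {ℓ r r' : ℕ} (hr : r < ℓ) (hr' : r' < ℓ)
    (h : q r + (ℓ - r) = q r' + (ℓ - r')) : r = r' := by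
  rcases Nat.lt_trichotomy r r' with h1 | h1 | h1
  · have := hq h1.le; omega
  · exact h1
  · have := hq h1.le; omega

private lemma beta_inj_s1 {q : ℕ → ℕ} (hq : Antitone q) {r r' : ℕ}
    (h : (q r : ℤ) - r = (q r' : ℤ) - r') : r = r' := by
  rcases Nat.lt_trichotomy r r' with h1 | h1 | h1
  · have := hq h1.le; omega
  · exact h1
  · have := hq h1.le; omega

/-- The `j`-truncated shape of `M`. -/
def trShape (M : MultiTableau) (j t r : ℕ) : ℕ :=
  ((Finset.range (M.shape t r)).filter fun c => M.entry t r c ≤ j).card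

variable {n ℓ m s : ℕ} {M : MultiTableau}

lemma lt_trShape (hstd : IsStandard n ℓ s M) {j t r c : ℕ} :
    c < trShape M j t r ↔ c < M.shape t r ∧ M.entry t r c ≤ j := by
  apply card_filter_lower
  intro c c' hle hlt hq
  rcases eq_or_lt_of_le hle with rfl | h
  · exact hq
  · exact le_trans (le_of_lt (hstd.2.2.2.2.1 t r c c' h hlt)) hq

lemma trShape_top (hstd : IsStandard n ℓ s M) (t r : ℕ) : trShape M s t r = M.shape t r := by
  apply nat_eq_of_lt_iff
  intro c
  rw [lt_trShape hstd]
  exact ⟨fun h => h.1, fun h => ⟨h, (hstd.2.2.1 t r c h).2⟩⟩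

lemma trShape_zero (hstd : IsStandard n ℓ s M) (t r : ℕ) : trShape M 0 t r = 0 := by
  by_contra h
  have h1 : 0 < trShape M 0 t r := Nat.pos_of_ne_zero h
  rw [lt_trShape hstd] at h1
  have := (hstd.2.2.1 t r 0 h1.1).1
  omega

lemma trShape_anti (hstd : IsStandard n ℓ s M) (j t : ℕ) : Antitone (trShape M j t) := by
  intro r r' hrr'
  apply nat_le_of_lt_imp
  intro c hc
  rw [lt_trShape hstd] at hc ⊢
  rcases eq_or_lt_of_le hrr' with rfl | hlt
  · exact hc
  · refine ⟨lt_of_lt_of_le hc.1 ((hstd.1 t).1 hrr'), ?_⟩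
    exact le_trans (le_of_lt (hstd.2.2.2.2.2.1 t r r' c hlt hc.1)) hc.2

/-- The truncated shape just below the entry of a node agrees with the column. -/
lemma trB1 (hstd : IsStandard n ℓ s M) {e t row col : ℕ} (he1 : 1 ≤ e)
    (hd : InDiag (M.shape t) row col) (he : M.entry t row col = e) :
    trShape M (e - 1) t row = col := by
  apply nat_eq_of_lt_iff
  intro c
  rw [lt_trShape hstd]
  constructor
  · rintro ⟨h1, h2⟩
    by_contra hc
    push_neg at hc
    rcases eq_or_lt_of_le hc with heq | h3
    · rw [← heq, he] at h2; omega
    · have h4 := hstd.2.2.2.2.1 t row col c h3 h1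
      rw [he] at h4
      omega
  · intro hc
    have h1 : c < M.shape t row := lt_trans hc hd
    have h2 := hstd.2.2.2.2.1 t row c col hc hd
    rw [he] at h2
    exact ⟨h1, by omega⟩

lemma trB2 (hstd : IsStandard n ℓ s M) {e t row col : ℕ} (he1 : 1 ≤ e)
    (hd : InDiag (M.shape t) row col) (he : M.entry t row col = e) :
    trShape M e t row = col + 1 := by
  apply nat_eq_of_lt_iff
  intro c
  rw [lt_trShape hstd]
  constructor
  · rintro ⟨h1, h2⟩
    by_contra hc
    push_neg at hc
    have h4 := hstd.2.2.2.2.1 t row col c (by omega) h1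
    rw [he] at h4
    omega
  · intro hc
    rcases eq_or_lt_of_le (Nat.lt_succ_iff.mp hc) with heq | h3
    · rw [heq]; exact ⟨hd, le_of_eq he⟩
    · have h1 : c < M.shape t row := lt_trans h3 hd
      have h2 := hstd.2.2.2.2.1 t row c col h3 hd
      rw [he] at h2
      exact ⟨h1, by omega⟩

lemma trB3 (hstd : IsStandard n ℓ s M) {e t row col : ℕ} (he1 : 1 ≤ e)
    (hd : InDiag (M.shape t) row col) (he : M.entry t row col = e)
    {r' : ℕ} (hr' : r' ≠ row) : trShape M e t r' = trShape M (e - 1) t r' := by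
  apply nat_eq_of_lt_iff
  intro c
  rw [lt_trShape hstd, lt_trShape hstd]
  constructor
  · rintro ⟨h1, h2⟩
    refine ⟨h1, ?_⟩
    rcases eq_or_lt_of_le h2 with heq | h3
    · exact absurd (hstd.2.2.2.2.2.2.1 t r' c row col h1 hd (by rw [heq, he])).1 hr'
    · omega
  · rintro ⟨h1, h2⟩
    exact ⟨h1, by omega⟩

lemma trB4 (hstd : IsStandard n ℓ s M) {e t : ℕ} (he1 : 1 ≤ e)
    (hne : ¬ ∃ r c, InDiag (M.shape t) r c ∧ M.entry t r c = e)
    (r : ℕ) : trShape M e t r = trShape M (e - 1) t r := by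
  apply nat_eq_of_lt_iff
  intro c
  rw [lt_trShape hstd, lt_trShape hstd]
  constructor
  · rintro ⟨h1, h2⟩
    refine ⟨h1, ?_⟩
    rcases eq_or_lt_of_le h2 with heq | h3
    · exact absurd ⟨r, c, h1, heq⟩ hne
    · omega
  · rintro ⟨h1, h2⟩
    exact ⟨h1, by omega⟩

lemma trB5 (hstd : IsStandard n ℓ s M) {e t row col : ℕ} (he1 : 1 ≤ e)
    (hd : InDiag (M.shape t) row col) (he : M.entry t row col = e) :
    row = 0 ∨ trShape M (e - 1) t row < trShape M (e - 1) t (row - 1) := by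
  rcases Nat.eq_zero_or_pos row with h0 | hpos
  · exact Or.inl h0
  · right
    rw [trB1 hstd he1 hd he]
    have hgoal : col < trShape M (e - 1) t (row - 1) := by
      rw [lt_trShape hstd]
      have hs : col < M.shape t (row - 1) := lt_of_lt_of_le hd ((hstd.1 t).1 (by omega))
      have hcol := hstd.2.2.2.2.2.1 t (row - 1) row col (by omega) hd
      rw [he] at hcol
      exact ⟨hs, by omega⟩
    exact hgoal

lemma row_lt_ell (hres : ResInRange ℓ m M) {t row col : ℕ}
    (hd : InDiag (M.shape t) row col) : row < ℓ := by
  have h0 : InDiag (M.shape t) row 0 := lt_of_le_of_lt (Nat.zero_le col) hd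
  have := (hres t row 0 h0).1
  simp only [resOf] at this
  omega

lemma comp_mem (hstd : IsStandard n ℓ s M) {t r c : ℕ} (hd : InDiag (M.shape t) r c) :
    t ∈ Finset.Icc 1 n := by
  simp only [Finset.mem_Icc]
  by_contra h
  have h2 := hstd.2.1 t (by omega) r
  have hd' : c < M.shape t r := hd
  omega

end GrowthProof
section GrowthProof2

/-- Components of `M` containing a node with entry `e`. -/
def TsetE (n : ℕ) (M : MultiTableau) (e : ℕ) : Finset ℕ :=
  (Finset.Icc 1 n).filter fun t => ∃ r c, InDiag (M.shape t) r c ∧ M.entry t r c = e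

/-- The boundary tuple (β-sets) of the `j`-truncation of `M`. -/
def SsetE (n ℓ : ℕ) (M : MultiTableau) (j p : ℕ) : Finset ℕ :=
  (Finset.Icc 1 n).filter fun t => ∃ r, r < ℓ ∧ trShape M j t r + (ℓ - r) = p

variable {n ℓ m s : ℕ} {M : MultiTableau}

lemma mem_TsetE (hstd : IsStandard n ℓ s M) {t e : ℕ} :
    t ∈ TsetE n M e ↔ ∃ r c, InDiag (M.shape t) r c ∧ M.entry t r c = e := by
  simp only [TsetE, Finset.mem_filter]
  exact ⟨fun h => h.2, fun h => ⟨comp_mem hstd h.choose_spec.choose_spec.1, h⟩⟩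

lemma mem_SsetE {t j p : ℕ} :
    t ∈ SsetE n ℓ M j p ↔ t ∈ Finset.Icc 1 n ∧ ∃ r, r < ℓ ∧ trShape M j t r + (ℓ - r) = p :=
  Finset.mem_filter

lemma bval_le (hstd : IsStandard n ℓ s M) (hres : ResInRange ℓ m M) {j t r : ℕ}
    (hr : r < ℓ) (hm : ℓ + 1 ≤ m) : trShape M j t r + (ℓ - r) ≤ m := by
  rcases Nat.eq_zero_or_pos (trShape M j t r) with h0 | hpos
  · omega
  · have hc : trShape M j t r - 1 < trShape M j t r := by omega
    rw [lt_trShape hstd] at hc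
    have h2 := (hres t r _ hc.1).2
    simp only [resOf] at h2
    omega

lemma Sset_zero (hstd : IsStandard n ℓ s M) (p : ℕ) :
    SsetE n ℓ M 0 p = if 1 ≤ p ∧ p ≤ ℓ then Finset.Icc 1 n else ∅ := by
  unfold SsetE
  split_ifs with h
  · apply Finset.filter_true_of_mem
    intro t _
    exact ⟨ℓ - p, by omega, by rw [trShape_zero hstd]; omega⟩
  · apply Finset.filter_false_of_mem
    rintro t _ ⟨r, hr, hb⟩
    rw [trShape_zero hstd] at hb
    omega

lemma Sset_outside (hstd : IsStandard n ℓ s M) (hres : ResInRange ℓ m M)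
    (hm : ℓ + 1 ≤ m) {j p : ℕ} (hp : p = 0 ∨ m < p) : SsetE n ℓ M j p = ∅ := by
  apply Finset.filter_false_of_mem
  rintro t _ ⟨r, hr, hb⟩
  have := bval_le (j := j) (t := t) hstd hres hr hm
  omega

/-- The main step lemma: the β-sets evolve by a flow step when passing from
the `(e-1)`-truncation to the `e`-truncation. -/
lemma Sset_step (hstd : IsStandard n ℓ s M) (hres : ResInRange ℓ m M)
    {e i : ℕ} (he1 : 1 ≤ e)
    (hi : ∀ t r c, InDiag (M.shape t) r c → M.entry t r c = e → (i : ℤ) = resOf ℓ r c) :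
    SsetE n ℓ M e i = SsetE n ℓ M (e - 1) i \ TsetE n M e ∧
    SsetE n ℓ M e (i + 1) = SsetE n ℓ M (e - 1) (i + 1) ∪ TsetE n M e ∧
    (∀ p, p ≠ i → p ≠ i + 1 → SsetE n ℓ M e p = SsetE n ℓ M (e - 1) p) ∧
    TsetE n M e ⊆ SsetE n ℓ M (e - 1) i ∧
    Disjoint (TsetE n M e) (SsetE n ℓ M (e - 1) (i + 1)) := by
  -- per-component analysis
  have main : ∀ t, t ∈ TsetE n M e →
      (t ∈ SsetE n ℓ M (e - 1) i ∧ t ∉ SsetE n ℓ M (e - 1) (i + 1) ∧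
       t ∈ SsetE n ℓ M e (i + 1) ∧ t ∉ SsetE n ℓ M e i ∧
       ∀ p, p ≠ i → p ≠ i + 1 → (t ∈ SsetE n ℓ M e p ↔ t ∈ SsetE n ℓ M (e - 1) p)) := by
    intro t ht
    rw [mem_TsetE hstd] at ht
    obtain ⟨row, col, hd, he⟩ := ht
    have hrow : row < ℓ := row_lt_ell hres hd
    have hieq : i = col + (ℓ - row) := by
      have := hi t row col hd he
      simp only [resOf] at this
      have h1 := (hres t row col hd).1
      simp only [resOf] at h1
      omega
    have b1 : trShape M (e - 1) t row = col := trB1 hstd he1 hd he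
    have b2 : trShape M e t row = col + 1 := trB2 hstd he1 hd he
    have b3 : ∀ r', r' ≠ row → trShape M e t r' = trShape M (e - 1) t r' :=
      fun r' hr' => trB3 hstd he1 hd he hr'
    have b5 := trB5 hstd he1 hd he
    have hanti := trShape_anti hstd (e - 1) t
    have htIcc := comp_mem hstd hd
    refine ⟨?_, ?_, ?_, ?_, ?_⟩
    · exact mem_SsetE.2 ⟨htIcc, row, hrow, by omega⟩
    · rw [mem_SsetE]
      rintro ⟨-, r'', hr'', hb⟩
      have hne : r'' ≠ row := by
        intro h
        rw [h, b1] at hb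
        omega
      rcases Nat.lt_trichotomy r'' row with h1 | h1 | h1
      · -- r'' < row
        rcases b5 with h0 | hlt
        · omega
        · rw [b1] at hlt
          have h2 : trShape M (e - 1) t r'' ≥ trShape M (e - 1) t (row - 1) :=
            hanti (by omega)
          omega
      · exact hne h1
      · have h2 : trShape M (e - 1) t r'' ≤ trShape M (e - 1) t row := hanti h1.le
        rw [b1] at h2
        omega
    · exact mem_SsetE.2 ⟨htIcc, row, hrow, by omega⟩
    · rw [mem_SsetE]
      rintro ⟨-, r'', hr'', hb⟩
      by_cases hne : r'' = row
      · rw [hne, b2] at hb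
        omega
      · rw [b3 r'' hne] at hb
        have := bval_inj hanti hr'' hrow (by omega : trShape M (e-1) t r'' + (ℓ - r'') = trShape M (e-1) t row + (ℓ - row))
        exact hne this
    · intro p hp1 hp2
      rw [mem_SsetE, mem_SsetE]
      constructor
      · rintro ⟨hI, r'', hr'', hb⟩
        by_cases hne : r'' = row
        · rw [hne, b2] at hb
          omega
        · rw [b3 r'' hne] at hb
          exact ⟨hI, r'', hr'', hb⟩
      · rintro ⟨hI, r'', hr'', hb⟩
        by_cases hne : r'' = row
        · rw [hne, b1] at hb
          omega
        · rw [← b3 r'' hne] at hb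
          exact ⟨hI, r'', hr'', hb⟩
  have same : ∀ t, t ∉ TsetE n M e → ∀ p, (t ∈ SsetE n ℓ M e p ↔ t ∈ SsetE n ℓ M (e - 1) p) := by
    intro t ht p
    rw [mem_TsetE hstd] at ht
    have b4 := trB4 hstd he1 ht
    rw [mem_SsetE, mem_SsetE]
    constructor
    · rintro ⟨hI, r'', hr'', hb⟩
      rw [b4 r''] at hb
      exact ⟨hI, r'', hr'', hb⟩
    · rintro ⟨hI, r'', hr'', hb⟩
      rw [← b4 r''] at hb
      exact ⟨hI, r'', hr'', hb⟩
  refine ⟨?_, ?_, ?_, ?_, ?_⟩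
  · ext t
    rw [Finset.mem_sdiff]
    by_cases ht : t ∈ TsetE n M e
    · have h := main t ht
      simp [h.2.2.2.1, ht]
    · rw [same t ht i]
      simp [ht]
  · ext t
    rw [Finset.mem_union]
    by_cases ht : t ∈ TsetE n M e
    · have h := main t ht
      simp [h.2.2.1, ht]
    · rw [same t ht (i + 1)]
      simp [ht]
  · intro p hp1 hp2
    ext t
    by_cases ht : t ∈ TsetE n M e
    · exact (main t ht).2.2.2.2 p hp1 hp2
    · exact same t ht p
  · intro t ht
    exact (main t ht).1
  · rw [Finset.disjoint_left]
    intro t ht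
    exact (main t ht).2.1

end GrowthProof2
section GrowthProof3

/-- The common residue (as a natural number) of the nodes of `M` with entry `e`. -/
noncomputable def resEnt (ℓ : ℕ) (M : MultiTableau) (e : ℕ) : ℕ :=
  if h : ∃ t r c, InDiag (M.shape t) r c ∧ M.entry t r c = e then
    (resOf ℓ h.choose_spec.choose h.choose_spec.choose_spec.choose).toNat
  else 0

variable {n ℓ m s : ℕ} {M : MultiTableau}

lemma resEnt_spec (hstd : IsStandard n ℓ s M) (hres : ResInRange ℓ m M)
    {e : ℕ} (hocc : ∃ t r c, InDiag (M.shape t) r c ∧ M.entry t r c = e) :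
    (1 ≤ resEnt ℓ M e ∧ (resEnt ℓ M e : ℤ) ≤ (m : ℤ) - 1) ∧
    ∀ t r c, InDiag (M.shape t) r c → M.entry t r c = e →
      (resEnt ℓ M e : ℤ) = resOf ℓ r c := by
  have hspec := hocc.choose_spec.choose_spec.choose_spec
  have hres0 := hres _ _ _ hspec.1
  have hre : resEnt ℓ M e = (resOf ℓ hocc.choose_spec.choose
      hocc.choose_spec.choose_spec.choose).toNat := by
    unfold resEnt
    rw [dif_pos hocc]
  have htn : ((resEnt ℓ M e : ℤ)) = resOf ℓ hocc.choose_spec.choose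
      hocc.choose_spec.choose_spec.choose := by
    rw [hre]
    exact Int.toNat_of_nonneg (by omega)
  refine ⟨⟨by omega, by omega⟩, ?_⟩
  intro t r c hd he
  have h8 := hstd.2.2.2.2.2.2.2 _ _ _ t r c hspec.1 hd (by rw [hspec.2, he])
  rw [htn, h8]

/-- The ladder presentation `g(M)`. -/
noncomputable def gPres (n ℓ m s : ℕ) (M : MultiTableau) (hstd : IsStandard n ℓ s M)
    (hocc : AllEntriesOccur s M) (hres : ResInRange ℓ m M) (hm : ℓ + 1 ≤ m) :
    LadderPresentation n ℓ m s where
  res r := resEnt ℓ M (r.val + 1)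
  mult r := (TsetE n M (r.val + 1)).card
  res_pos r := (resEnt_spec hstd hres (hocc (r.val + 1) (by omega) (by omega))).1.1
  res_lt r := by
    show resEnt ℓ M (r.val + 1) < m
    have := (resEnt_spec hstd hres (hocc (r.val + 1) (by omega) (by omega))).1.2
    omega
  mult_pos r := by
    obtain ⟨t, r', c, hd, he⟩ := hocc (r.val + 1) (by omega) (by omega)
    have : t ∈ TsetE n M (r.val + 1) := (mem_TsetE hstd).2 ⟨r', c, hd, he⟩
    exact Finset.card_pos.2 ⟨t, this⟩
  mult_le r := by
    show (TsetE n M (r.val + 1)).card ≤ n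
    have hsub : TsetE n M (r.val + 1) ⊆ Finset.Icc 1 n := Finset.filter_subset _ _
    have h := Finset.card_le_card hsub
    rw [Nat.card_Icc] at h
    exact le_trans h (by omega)

lemma wt_card (hstd : IsStandard n ℓ s M) (hocc : AllEntriesOccur s M)
    (hres : ResInRange ℓ m M) (hm : ℓ + 1 ≤ m) :
    ∀ r, r ≤ s → ∀ p,
      wtSeq (gPres n ℓ m s M hstd hocc hres hm) r p = ((SsetE n ℓ M r p).card : ℤ) := by
  intro r
  induction r with
  | zero =>
    intro _ p
    rw [Sset_zero hstd]
    simp only [wtSeq]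
    split_ifs with h
    · rw [Nat.card_Icc]; push_cast; omega
    · simp
  | succ r ih =>
    intro hr p
    have h : r < s := by omega
    have hocc' : ∃ t r' c, InDiag (M.shape t) r' c ∧ M.entry t r' c = r + 1 :=
      hocc (r + 1) (by omega) (by omega)
    have hspec := resEnt_spec hstd hres hocc'
    obtain ⟨hA, hB, hC, hD, hE⟩ :=
      Sset_step (i := resEnt ℓ M (r + 1)) hstd hres (by omega) hspec.2
    simp only [Nat.add_sub_cancel] at hA hB hC hD hE
    simp only [wtSeq]
    rw [dif_pos h]
    have hresP : (gPres n ℓ m s M hstd hocc hres hm).res ⟨r, h⟩ = resEnt ℓ M (r + 1) := rfl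
    have hmultP : (gPres n ℓ m s M hstd hocc hres hm).mult ⟨r, h⟩ =
        (TsetE n M (r + 1)).card := rfl
    rw [hresP, hmultP, ih (by omega) p]
    by_cases hp1 : p = resEnt ℓ M (r + 1)
    · rw [if_pos hp1, if_neg (by omega), hp1, hA]
      have hle := Finset.card_le_card hD
      rw [Finset.card_sdiff_of_subset hD]
      push_cast [Nat.cast_sub hle]
      ring
    · rw [if_neg hp1]
      by_cases hp2 : p = resEnt ℓ M (r + 1) + 1
      · rw [if_pos hp2, hp2, hB, Finset.card_union_of_disjoint hE.symm]
        push_cast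
        ring
      · rw [if_neg hp2, hC p hp1 hp2]
        ring

end GrowthProof3

/-!
STATEMENT 1: Extended growth algorithm (well-definedness and injectivity of
`g`).  (i) For every standard `n`-multitableau `M` with entries in `{1,…,s}`,
each entry occurring, all residues in `{1,…,m−1}`, the ladder presentation
`P_T` (with `i_r` the common residue and `j_r` the number of the entry-`r`
nodes) is valid, and the subsets `T_r` of components containing entry `r`,
together with the tuples `S⁽ʳ⁾` forced by the flow conditions, constitute a
flow on it (in particular `T_r ⊆ S⁽ʳ⁻¹⁾_{i_r}`, `T_r ∩ S⁽ʳ⁻¹⁾_{i_r+1} = ∅`,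
`|T_r| = j_r`).  (ii) `g` is injective.
-/
theorem growth_algorithm (n ℓ m : ℕ) (hn : 2 ≤ n) (hℓ : 1 ≤ ℓ) (hm : ℓ + 1 ≤ m)
    (s : ℕ) :
    (∀ M : MultiTableau, IsStandard n ℓ s M → AllEntriesOccur s M →
      ResInRange ℓ m M →
      ∃ (P : LadderPresentation n ℓ m s) (f : LadderFlow P),
        IsValid P ∧ GrowthData M P f) ∧
    (∀ M M' : MultiTableau,
      IsStandard n ℓ s M → AllEntriesOccur s M → ResInRange ℓ m M →
      IsStandard n ℓ s M' → AllEntriesOccur s M' → ResInRange ℓ m M' →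
      ∀ (P : LadderPresentation n ℓ m s) (f : LadderFlow P),
        GrowthData M P f → GrowthData M' P f → M = M') := by
  constructor
  · -- Part (i): well-definedness of g
    intro M hstd hocc hres
    refine ⟨gPres n ℓ m s M hstd hocc hres hm, ?_⟩
    have hwt := wt_card hstd hocc hres hm
    have hstepAll : ∀ r : Fin s,
        SsetE n ℓ M (r.val + 1) (resEnt ℓ M (r.val + 1)) =
          SsetE n ℓ M r.val (resEnt ℓ M (r.val + 1)) \ TsetE n M (r.val + 1) ∧
        SsetE n ℓ M (r.val + 1) (resEnt ℓ M (r.val + 1) + 1) =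
          SsetE n ℓ M r.val (resEnt ℓ M (r.val + 1) + 1) ∪ TsetE n M (r.val + 1) ∧
        (∀ p, p ≠ resEnt ℓ M (r.val + 1) → p ≠ resEnt ℓ M (r.val + 1) + 1 →
          SsetE n ℓ M (r.val + 1) p = SsetE n ℓ M r.val p) ∧
        TsetE n M (r.val + 1) ⊆ SsetE n ℓ M r.val (resEnt ℓ M (r.val + 1)) ∧
        Disjoint (TsetE n M (r.val + 1))
          (SsetE n ℓ M r.val (resEnt ℓ M (r.val + 1) + 1)) := by
      intro r
      have hocc' := hocc (r.val + 1) (by omega) (by omega)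
      have hspec := resEnt_spec hstd hres hocc'
      have hstep := Sset_step (i := resEnt ℓ M (r.val + 1)) hstd hres (by omega) hspec.2
      simpa only [Nat.add_sub_cancel] using hstep
    refine ⟨⟨fun r p => SsetE n ℓ M r.val p, fun r => TsetE n M (r.val + 1),
      fun r p => Finset.filter_subset _ _,
      fun r p hp => Sset_outside hstd hres hm hp,
      fun r p hp1 hp2 => (hwt r.val (Nat.lt_succ_iff.mp r.isLt) p).symm,
      ?_,
      fun r => (hstepAll r).2.2.2.1,
      fun r => rfl,
      fun r => (hstepAll r).2.2.2.2,
      fun r => (hstepAll r).1,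
      fun r => (hstepAll r).2.1,
      fun r p hp1 hp2 => (hstepAll r).2.2.1 p hp1 hp2⟩, ?_, ?_, ?_⟩
    · intro p hp1 hp2
      show SsetE n ℓ M (0 : Fin (s + 1)).val p = _
      have h0 : ((0 : Fin (s + 1)).val : ℕ) = 0 := rfl
      rw [h0, Sset_zero hstd]
      split_ifs with h1 h2
      · rfl
      · exfalso; omega
      · exfalso; omega
      · rfl
    · -- IsValid
      intro r hr p hp1 hp2
      rw [hwt r hr p]
      constructor
      · exact Int.natCast_nonneg _
      · have hsub : SsetE n ℓ M r p ⊆ Finset.Icc 1 n := Finset.filter_subset _ _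
        have h := Finset.card_le_card hsub
        rw [Nat.card_Icc] at h
        have : (SsetE n ℓ M r p).card ≤ n := le_trans h (by omega)
        exact_mod_cast this
    · -- GrowthData, first component
      intro r t r' c hd he
      exact (resEnt_spec hstd hres (hocc (r.val + 1) (by omega) (by omega))).2 t r' c hd he
    · -- GrowthData, second component
      intro r t
      exact mem_TsetE hstd
  · -- Part (ii): injectivity of g
    intro M M' hstd hocc hres hstd' hocc' hres' P f hGD hGD'
    have key : ∀ j, j ≤ s → ∀ t r, trShape M j t r = trShape M' j t r := by
      intro j
      induction j with
      | zero => intro _ t r; rw [trShape_zero hstd, trShape_zero hstd']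
      | succ j ih =>
        intro hj t r
        have hjs : j < s := by omega
        have iha : ∀ t r, trShape M j t r = trShape M' j t r := ih (by omega)
        by_cases ht : t ∈ f.T ⟨j, hjs⟩
        · obtain ⟨r1, c1, hd1, he1⟩ := (hGD.2 ⟨j, hjs⟩ t).1 ht
          obtain ⟨r2, c2, hd2, he2⟩ := (hGD'.2 ⟨j, hjs⟩ t).1 ht
          have hres1 := hGD.1 ⟨j, hjs⟩ t r1 c1 hd1 he1
          have hres2 := hGD'.1 ⟨j, hjs⟩ t r2 c2 hd2 he2
          have he1' : M.entry t r1 c1 = j + 1 := he1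
          have he2' : M'.entry t r2 c2 = j + 1 := he2
          have b1 : trShape M j t r1 = c1 := by
            have hb := trB1 hstd (by omega) hd1 he1'
            simpa only [Nat.add_sub_cancel] using hb
          have b1' : trShape M' j t r2 = c2 := by
            have hb := trB1 hstd' (by omega) hd2 he2'
            simpa only [Nat.add_sub_cancel] using hb
          have hanti := trShape_anti hstd j t
          have hrr : (trShape M j t r1 : ℤ) - r1 = (trShape M j t r2 : ℤ) - r2 := by
            have hre : resOf ℓ r1 c1 = resOf ℓ r2 c2 := by rw [← hres1, ← hres2]
            simp only [resOf] at hre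
            rw [b1, iha t r2, b1']
            omega
          have hr12 : r1 = r2 := beta_inj_s1 hanti hrr
          have hc12 : c1 = c2 := by
            rw [← b1, hr12, iha t r2, b1']
          by_cases hrr1 : r = r1
          · rw [hrr1]
            have hb2 := trB2 hstd (by omega) hd1 he1'
            have hb2' := trB2 hstd' (by omega) hd2 he2'
            rw [hb2, hr12, hb2', hc12]
          · have h3 := trB3 hstd (by omega) hd1 he1' (r' := r) hrr1
            have h3' := trB3 hstd' (by omega) hd2 he2' (r' := r) (by omega)
            simp only [Nat.add_sub_cancel] at h3 h3'
            rw [h3, h3', iha]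
        · have hne : ¬ ∃ r' c, InDiag (M.shape t) r' c ∧ M.entry t r' c = j + 1 :=
            fun hex => ht ((hGD.2 ⟨j, hjs⟩ t).2 hex)
          have hne' : ¬ ∃ r' c, InDiag (M'.shape t) r' c ∧ M'.entry t r' c = j + 1 :=
            fun hex => ht ((hGD'.2 ⟨j, hjs⟩ t).2 hex)
          have b4 := trB4 hstd (by omega) hne r
          have b4' := trB4 hstd' (by omega) hne' r
          simp only [Nat.add_sub_cancel] at b4 b4'
          rw [b4, b4', iha]
    have hsh : M.shape = M'.shape := by
      funext t r
      rw [← trShape_top hstd t r, ← trShape_top hstd' t r, key s le_rfl]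
    have hent : ∀ t r c, M.entry t r c = M'.entry t r c := by
      intro t r c
      by_cases hd : InDiag (M.shape t) r c
      · have hd' : InDiag (M'.shape t) r c := by rw [← hsh]; exact hd
        have hb := hstd.2.2.1 t r c hd
        have hb' := hstd'.2.2.1 t r c hd'
        have h1 : c < trShape M (M.entry t r c) t r := (lt_trShape hstd).2 ⟨hd, le_rfl⟩
        have h2 : c < trShape M' (M'.entry t r c) t r := (lt_trShape hstd').2 ⟨hd', le_rfl⟩
        rw [key (M.entry t r c) hb.2] at h1
        rw [← key (M'.entry t r c) hb'.2] at h2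
        rw [lt_trShape hstd'] at h1
        rw [lt_trShape hstd] at h2
        omega
      · have hd' : ¬ InDiag (M'.shape t) r c := by rw [← hsh]; exact hd
        rw [hstd.2.2.2.1 t r c hd, hstd'.2.2.2.1 t r c hd']
    cases M
    cases M'
    simp only [MultiTableau.mk.injEq]
    refine ⟨hsh, ?_⟩
    funext t r c
    exact hent t r c

end

end SlnWeb
end
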